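/- arXiv:math/0401224 — 4 statements merged into one kernel-verified Lean document; each statement's English description precedes it below -/
import Mathlib

section
/- Let X and Y be distinct length-n ternary strings over {1,2,3} with X < Y in the snake ordering, where n ≥ 3, and suppose Y ≠ (1,...,1), (2,...,2), (3,...,3) and X ≠ (1,...,1), (2,...,2), (3,...,3). Then there exists a string Z < Y (in the snake ordering), Z not equal to any constant string, such that Z differs from Y in exactly one coordinate, and every coordinate where X agrees with Y is a coordinate where Z agrees with Y. -/
/-!
`X < Y` in the snake order iff at the first position `i` where they differ, `X i < Y i` or
`X i > Y i` according as the number of even letters of `Y` before `i` is even or odd. So changing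
`Y i` to `X i` gives the required `Z`, unless that makes `Z` constant, i.e. `Y` is constant `c = X i`
off `i`. If then `Y i ∈ {1, 3}`, the third letter lies on the same side of `Y i` as `c` and works
instead. If `Y i = 2`, then `c` is odd, so no even letter precedes `i`, forcing `c = 1`; as `X` is
nonconstant it has a letter `≠ 1` at some `k > i`, and changing `Y k = 1` to `3` works, because
exactly one even letter (the `2` at `i`) precedes `k`.
-/

/-- The snake ordering on ternary strings. -/
def snakeLt : List ℕ → List ℕ → Prop
  | a :: x, b :: y =>
      a < b ∨ (a = b ∧ if a % 2 = 1 then snakeLt x y else snakeLt y x)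
  | _, _ => False
termination_by x y => x.length + y.length
decreasing_by all_goals simp [List.length_cons]; omega

open Finset Function

namespace Snake

variable {n : ℕ}

def evenCountBelow (Y : Fin n → ℕ) (i : Fin n) : ℕ := #{j | j < i ∧ Even (Y j)}

def LtAt (Y : Fin n → ℕ) (i : Fin n) (a : ℕ) : Prop :=
  if Even (evenCountBelow Y i) then a < Y i else Y i < a

lemma evenCountBelow_zero (Y : Fin (n + 1) → ℕ) : evenCountBelow Y 0 = 0 := by
  simp [evenCountBelow]

lemma evenCountBelow_succ (Y : Fin (n + 1) → ℕ) (i : Fin n) :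
    evenCountBelow Y i.succ = evenCountBelow (fun j => Y j.succ) i + if Even (Y 0) then 1 else 0 := by
  simp only [evenCountBelow, card_filter, Fin.sum_univ_succ, Fin.succ_pos, Fin.succ_lt_succ_iff,
    true_and]
  omega

lemma evenCountBelow_congr {X Y : Fin n → ℕ} {i : Fin n} (h : ∀ j < i, X j = Y j) :
    evenCountBelow X i = evenCountBelow Y i := by
  unfold evenCountBelow
  congr 1
  exact filter_congr fun j _ => and_congr_right fun hj => by rw [h j hj]

lemma ne_of_ltAt {Y : Fin n → ℕ} {i : Fin n} {a : ℕ} (h : LtAt Y i a) : a ≠ Y i := by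
  rintro rfl
  unfold LtAt at h
  split_ifs at h <;> exact lt_irrefl _ h

theorem snakeLt_ofFn_iff : ∀ {n : ℕ} (X Y : Fin n → ℕ),
    snakeLt (List.ofFn X) (List.ofFn Y) ↔ ∃ i, (∀ j < i, X j = Y j) ∧ LtAt Y i (X i)
  | 0, X, Y => by simp [snakeLt]
  | n + 1, X, Y => by
    rw [List.ofFn_succ, List.ofFn_succ, snakeLt, Fin.exists_fin_succ]
    simp only [Fin.forall_fin_succ (P := fun j => j < _ → _), Fin.succ_pos, Fin.succ_lt_succ_iff,
      forall_const, Fin.not_lt_zero, IsEmpty.forall_iff, true_and, and_assoc,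
      exists_and_left]
    refine or_congr (by simp [LtAt, evenCountBelow_zero]) (and_congr_right fun h0 => ?_)
    have hY0 : X 0 % 2 = 1 ↔ ¬Even (Y 0) := by rw [h0, Nat.not_even_iff]
    split_ifs with hodd
    · rw [snakeLt_ofFn_iff]
      refine exists_congr fun i => and_congr_right fun _ => ?_
      rw [LtAt, LtAt, evenCountBelow_succ, if_neg (hY0.1 hodd), add_zero]
    · rw [snakeLt_ofFn_iff]
      refine exists_congr fun i => ?_
      rw [forall₂_congr fun _ _ => eq_comm]
      refine and_congr_right fun hagree => ?_
      simp only [LtAt, evenCountBelow_succ, if_pos (not_not.1 (mt hY0.2 hodd)), Nat.even_add_one,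
        ite_not, evenCountBelow_congr hagree]

lemma evenCountBelow_of_forall_ne_not_even {Y : Fin n → ℕ} {i : Fin n}
    (h : ∀ j ≠ i, ¬Even (Y j)) (k : Fin n) :
    evenCountBelow Y k = if i < k ∧ Even (Y i) then 1 else 0 := by
  have hfilter : ({j | j < k ∧ Even (Y j)} : Finset (Fin n)) =
      ({i} : Finset (Fin n)).filter fun j => j < k ∧ Even (Y j) := by
    ext j
    simp only [mem_filter, mem_univ, true_and, mem_singleton]
    exact ⟨fun hj => ⟨of_not_not fun hji => h j hji hj.2, hj⟩, fun hj => hj.2⟩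
  rw [evenCountBelow, hfilter, filter_singleton]
  split_ifs <;> rfl

theorem exists_shelling_update {X Y : Fin n → ℕ} (hY : ∀ j, Y j = 1 ∨ Y j = 2 ∨ Y j = 3)
    {k : Fin n} {v : ℕ} (hv : v = 1 ∨ v = 2 ∨ v = 3) (hXk : X k ≠ Y k) {j : Fin n}
    (hjk : j ≠ k) (hj : Y j ≠ v) (hlt : LtAt Y k v) :
    ∃ Z : Fin n → ℕ,
      (∀ j, Z j = 1 ∨ Z j = 2 ∨ Z j = 3) ∧
      (¬ ∃ c, ∀ j, Z j = c) ∧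
      snakeLt (List.ofFn Z) (List.ofFn Y) ∧
      (∃ i : Fin n, Z i ≠ Y i ∧ ∀ j, j ≠ i → Z j = Y j) ∧
      (∀ j, X j = Y j → Z j = Y j) := by
  refine ⟨update Y k v, fun l => ?_, ?_, ?_, ⟨k, ?_, fun l hl => update_of_ne hl _ _⟩,
    fun l hl => update_of_ne (by rintro rfl; exact hXk hl) _ _⟩
  · rcases eq_or_ne l k with rfl | hl
    · rwa [update_self]
    · rw [update_of_ne hl]
      exact hY l
  · rintro ⟨c, hc⟩
    refine hj ?_
    rw [← update_of_ne hjk v Y, hc j, ← hc k, update_self]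
  · exact (snakeLt_ofFn_iff _ _).2 ⟨k, fun l hl => update_of_ne hl.ne _ _, by rwa [update_self]⟩
  · rw [update_self]
    exact ne_of_ltAt hlt

end Snake

open Snake

theorem snake_shelling_lemma_general (n : ℕ) (X Y : Fin n → ℕ)
    (hX : ∀ j, X j = 1 ∨ X j = 2 ∨ X j = 3) (hY : ∀ j, Y j = 1 ∨ Y j = 2 ∨ Y j = 3)
    (hXne : ¬ ∃ c, ∀ j, X j = c) (hYne : ¬ ∃ c, ∀ j, Y j = c)
    (hlt : snakeLt (List.ofFn X) (List.ofFn Y)) :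
    ∃ Z : Fin n → ℕ,
      (∀ j, Z j = 1 ∨ Z j = 2 ∨ Z j = 3) ∧
      (¬ ∃ c, ∀ j, Z j = c) ∧
      snakeLt (List.ofFn Z) (List.ofFn Y) ∧
      (∃ i : Fin n, Z i ≠ Y i ∧ ∀ j, j ≠ i → Z j = Y j) ∧
      (∀ j, X j = Y j → Z j = Y j) := by
  obtain ⟨i, hagree, hcmp⟩ := (snakeLt_ofFn_iff X Y).1 hlt
  have hXi : X i ≠ Y i := ne_of_ltAt hcmp
  by_cases hoff : ∃ j ≠ i, Y j ≠ X i
  · obtain ⟨j, hji, hj⟩ := hoff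
    exact exists_shelling_update hY (hX i) hXi hji hj hcmp
  push Not at hoff hXne hYne
  obtain ⟨j, hj⟩ := hYne (Y i)
  have hji : j ≠ i := by rintro rfl; exact hj rfl
  have hXi_tern := hX i
  have hYi_tern := hY i
  by_cases hd : Y i = 2
  · have hodd : ∀ j ≠ i, ¬Even (Y j) := fun j hj => by
      rw [hoff j hj, Nat.not_even_iff]
      omega
    have hc : X i = 1 := by
      simp only [LtAt, evenCountBelow_of_forall_ne_not_even hodd, lt_irrefl, false_and,
        if_false, Even.zero, if_true, hd] at hcmp
      omega
    obtain ⟨k, hk⟩ := hXne 1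
    have hik : i < k := by
      rcases lt_trichotomy k i with h | rfl | h
      · exact absurd ((hagree k h).trans (hoff k h.ne)) (hc ▸ hk)
      · exact absurd hc hk
      · exact h
    have hYk : Y k = 1 := (hoff k hik.ne').trans hc
    refine exists_shelling_update hY (v := 3) (by simp) (by rwa [hYk]) hik.ne (by omega) ?_
    simp [LtAt, evenCountBelow_of_forall_ne_not_even hodd, hik, hd, hYk]
  · refine exists_shelling_update hY (v := 6 - X i - Y i) (by omega) hXi hji
      (by rw [hoff j hji]; omega) ?_
    unfold LtAt at hcmp ⊢
    split_ifs at hcmp ⊢ <;> omega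

/-- Key shelling lemma for `T_{3,n}`: if `X < Y` in the snake ordering are nonconstant
length-`n` ternary strings (`n ≥ 3`), there is a nonconstant string `Z < Y` that differs
from `Y` in exactly one coordinate, and agrees with `Y` wherever `X` does. -/
theorem snake_shelling_lemma (n : ℕ) (hn : 3 ≤ n) (X Y : Fin n → ℕ)
    (hX : ∀ j, X j = 1 ∨ X j = 2 ∨ X j = 3) (hY : ∀ j, Y j = 1 ∨ Y j = 2 ∨ Y j = 3)
    (hXne : ¬ ∃ c, ∀ j, X j = c) (hYne : ¬ ∃ c, ∀ j, Y j = c)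
    (hlt : snakeLt (List.ofFn X) (List.ofFn Y)) :
    ∃ Z : Fin n → ℕ,
      (∀ j, Z j = 1 ∨ Z j = 2 ∨ Z j = 3) ∧
      (¬ ∃ c, ∀ j, Z j = c) ∧
      snakeLt (List.ofFn Z) (List.ofFn Y) ∧
      (∃ i : Fin n, Z i ≠ Y i ∧ ∀ j, j ≠ i → Z j = Y j) ∧
      (∀ j, X j = Y j → Z j = Y j) :=
  snake_shelling_lemma_general n X Y hX hY hXne hYne hlt
end

section
/- For n ≥ 2, the simplicial complex T_{3,n} is shellable: the snake ordering on its facets (non-constant ternary strings of length n) is a shelling order. -/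
/-- The facet of `T_{3,n}` corresponding to a ternary string `s`, as a set of vertices
`(j, s j)` in `{1,...,n} × {1,2,3}`. -/
def facet {n : ℕ} (s : Fin n → ℕ) : Finset (Fin n × ℕ) :=
  Finset.univ.image fun j => (j, s j)

/-- A facet of `T_{3,n}`: a nonconstant ternary string of length `n`. -/
def IsFacet {n : ℕ} (s : Fin n → ℕ) : Prop :=
  (∀ j, s j = 1 ∨ s j = 2 ∨ s j = 3) ∧ ¬ ∃ c, ∀ j, s j = c

open Finset

theorem snakeLt_cons (a b : ℕ) (x y : List ℕ) :
    snakeLt (a :: x) (b :: y) ↔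
      a < b ∨ (a = b ∧ if a % 2 = 1 then snakeLt x y else snakeLt y x) := by
  rw [snakeLt]

theorem snakeLt_irrefl : ∀ l : List ℕ, ¬ snakeLt l l
  | [] => by simp [snakeLt]
  | a :: l => by
    rw [snakeLt_cons]
    rintro (h | ⟨-, h⟩)
    · exact lt_irrefl a h
    · split at h <;> exact snakeLt_irrefl l h

theorem snakeLt_append_cons_iff (l x y : List ℕ) {a b : ℕ} (hab : a ≠ b) :
    snakeLt (l ++ a :: x) (l ++ b :: y) ↔
      if l.countP (· % 2 = 0) % 2 = 0 then a < b else b < a := by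
  induction l generalizing a b x y with
  | nil => simp [snakeLt_cons, hab]
  | cons c l ih =>
    rw [List.cons_append, List.cons_append, snakeLt_cons, ih _ _ hab, ih _ _ hab.symm,
      List.countP_cons]
    simp only [lt_irrefl, false_or, true_and, decide_eq_true_eq]
    split_ifs <;> omega

theorem List.ofFn_eq_take_append_cons_drop {α : Type*} {n : ℕ} (f : Fin n → α) (i : Fin n) :
    List.ofFn f = (List.ofFn f).take i ++ f i :: (List.ofFn f).drop (i + 1) := by
  rw [← List.getElem_ofFn (f := f) (h := by simp), ← List.drop_eq_getElem_cons,
    List.take_append_drop]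

theorem List.countP_take_ofFn {α : Type*} {n : ℕ} (p : α → Prop) [DecidablePred p]
    (f : Fin n → α) (k : ℕ) :
    ((List.ofFn f).take k).countP (fun a => decide (p a)) = #{j : Fin n | j < k ∧ p (f j)} := by
  induction n generalizing k with
  | zero => simp
  | succ n ih =>
    cases k with
    | zero => simp
    | succ k =>
      rw [List.ofFn_succ, List.take_succ_cons, List.countP_cons, ih, Fin.card_filter_univ_succ]
      simp only [Fin.val_zero, Fin.val_succ]
      split_ifs <;> simp_all [add_comm]

theorem exists_forall_lt_eq_and_ne {ι α : Type*} [LinearOrder ι] [WellFoundedLT ι]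
    {f g : ι → α} (h : f ≠ g) : ∃ i, (∀ j < i, f j = g j) ∧ f i ≠ g i := by
  obtain ⟨i, hi, hmin⟩ := wellFounded_lt.has_min {j | f j ≠ g j} (Function.ne_iff.1 h)
  exact ⟨i, fun j hj => not_not.1 fun hne => hmin j hne hj, hi⟩

section Snake

variable {n : ℕ}

def evenCountBelow (Y : Fin n → ℕ) (k : ℕ) : ℕ := #{j : Fin n | j < k ∧ Y j % 2 = 0}

theorem evenCountBelow_eq_zero {Y : Fin n → ℕ} {k : ℕ} (h : ∀ j : Fin n, j < k → Y j % 2 = 1) :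
    evenCountBelow Y k = 0 := by
  rw [evenCountBelow, card_eq_zero, filter_eq_empty_iff]
  intro j _ hj
  have := h j hj.1
  omega

theorem evenCountBelow_eq_one {Y : Fin n → ℕ} {i : Fin n} {k : ℕ} (hik : i < k)
    (hi : Y i % 2 = 0) (h : ∀ j ≠ i, Y j % 2 = 1) : evenCountBelow Y k = 1 := by
  rw [evenCountBelow, card_eq_one]
  refine ⟨i, eq_singleton_iff_unique_mem.2 ⟨by simp [hik, hi], fun j hj => ?_⟩⟩
  by_contra hji
  have := h j hji
  simp only [mem_filter] at hj
  omega

theorem snakeLt_ofFn_iff {X Y : Fin n → ℕ} {i : Fin n} (hpre : ∀ j < i, X j = Y j)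
    (hi : X i ≠ Y i) :
    snakeLt (List.ofFn X) (List.ofFn Y) ↔
      if evenCountBelow Y i % 2 = 0 then X i < Y i else Y i < X i := by
  have htake : (List.ofFn X).take i = (List.ofFn Y).take i := by
    apply List.ext_getElem (by simp)
    intro j hjX hjY
    simp only [List.getElem_take, List.getElem_ofFn]
    exact hpre _ (Fin.mk_lt_of_lt_val (by simp at hjX; omega))
  rw [List.ofFn_eq_take_append_cons_drop X i, List.ofFn_eq_take_append_cons_drop Y i, htake,
    snakeLt_append_cons_iff _ _ _ hi, List.countP_take_ofFn, evenCountBelow]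

theorem snakeLt_ofFn_update_iff {Y : Fin n → ℕ} {k : Fin n} {v : ℕ} (hv : v ≠ Y k) :
    snakeLt (List.ofFn (Function.update Y k v)) (List.ofFn Y) ↔
      if evenCountBelow Y k % 2 = 0 then v < Y k else Y k < v := by
  rw [snakeLt_ofFn_iff (fun j hj => Function.update_of_ne hj.ne _ _) (by simpa using hv),
    Function.update_self]

theorem mem_facet {s : Fin n → ℕ} {p : Fin n × ℕ} : p ∈ facet s ↔ s p.1 = p.2 := by
  obtain ⟨j, a⟩ := p
  simp [facet, eq_comm]

theorem card_facet (s : Fin n → ℕ) : #(facet s) = n := by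
  rw [facet, card_image_of_injective _ fun _ _ h => (Prod.ext_iff.1 h).1, card_univ,
    Fintype.card_fin]

theorem facet_update_inter_facet {Y : Fin n → ℕ} {k : Fin n} {v : ℕ} (hv : v ≠ Y k) :
    facet (Function.update Y k v) ∩ facet Y = (facet Y).erase (k, Y k) := by
  ext ⟨j, a⟩
  rcases eq_or_ne j k with rfl | hjk
  · simp only [mem_inter, mem_erase, mem_facet, Function.update_self, ne_eq, Prod.mk.injEq,
      true_and]
    omega
  · simp [mem_facet, hjk]

theorem facet_inter_facet_subset_erase {X Y : Fin n → ℕ} {k : Fin n} (hk : X k ≠ Y k) :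
    facet X ∩ facet Y ⊆ (facet Y).erase (k, Y k) := by
  rintro ⟨j, a⟩ hj
  simp only [mem_inter, mem_facet] at hj
  refine mem_erase.2 ⟨fun h => hk ?_, mem_facet.2 hj.2⟩
  obtain rfl : j = k := congrArg Prod.fst h
  exact hj.1.trans hj.2.symm

theorem isFacet_update {Y : Fin n → ℕ} (hY : ∀ j, Y j = 1 ∨ Y j = 2 ∨ Y j = 3)
    {k : Fin n} {v : ℕ} (hv : v = 1 ∨ v = 2 ∨ v = 3) (hne : ∃ j ≠ k, Y j ≠ v) :
    IsFacet (Function.update Y k v) := by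
  obtain ⟨j, hjk, hj⟩ := hne
  refine ⟨fun l => ?_, fun ⟨c, hc⟩ => hj ?_⟩
  · rcases eq_or_ne l k with rfl | hlk
    · simpa using hv
    · simpa [Function.update_of_ne hlk] using hY l
  · have hj' := hc j
    have hk := hc k
    rw [Function.update_of_ne hjk] at hj'
    rw [Function.update_self] at hk
    rw [hj', hk]

theorem exists_shelling_update_of_eq_one {X Y : Fin n → ℕ} (hX : IsFacet X) {i : Fin n}
    (hpre : ∀ j < i, X j = Y j) (hXi : X i = 1) (hYi : Y i = 2) (hY : ∀ j ≠ i, Y j = 1) :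
    ∃ k v, X k ≠ Y k ∧ (v = 1 ∨ v = 2 ∨ v = 3) ∧
      (if evenCountBelow Y k % 2 = 0 then v < Y k else Y k < v) ∧ ∃ j ≠ k, Y j ≠ v := by
  obtain ⟨k, hk⟩ : ∃ k, X k ≠ 1 := by
    by_contra! h
    exact hX.2 ⟨1, h⟩
  have hki : k ≠ i := fun h => hk (h ▸ hXi)
  have hik : i < k := by
    refine lt_of_le_of_ne (not_lt.1 fun hki' => hk ?_) hki.symm
    rw [hpre k hki', hY k hki]
  have hcount : evenCountBelow Y k = 1 :=
    evenCountBelow_eq_one (i := i) hik (by omega) fun j hj => by rw [hY j hj]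
  refine ⟨k, 3, by rwa [hY k hki], by simp, ?_, i, hki.symm, by omega⟩
  rw [hcount, if_neg (by norm_num), hY k hki]
  norm_num

theorem exists_shelling_update {X Y : Fin n → ℕ} (hX : IsFacet X) (hY : IsFacet Y)
    {i : Fin n} (hpre : ∀ j < i, X j = Y j) (hi : X i ≠ Y i)
    (hdir : if evenCountBelow Y i % 2 = 0 then X i < Y i else Y i < X i) :
    ∃ k v, X k ≠ Y k ∧ (v = 1 ∨ v = 2 ∨ v = 3) ∧
      (if evenCountBelow Y k % 2 = 0 then v < Y k else Y k < v) ∧ ∃ j ≠ k, Y j ≠ v := by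
  by_cases hgood : ∃ v, (v = 1 ∨ v = 2 ∨ v = 3) ∧
      (if evenCountBelow Y i % 2 = 0 then v < Y i else Y i < v) ∧ ∃ j ≠ i, Y j ≠ v
  · obtain ⟨v, hv⟩ := hgood
    exact ⟨i, v, hi, hv⟩
  push Not at hgood
  -- every admissible letter at `i`, in particular `X i`, equals every letter of `Y` off `i`
  obtain ⟨j₀, hj₀⟩ : ∃ j, Y j ≠ Y i := by
    by_contra! h
    exact hY.2 ⟨Y i, h⟩
  have hj₀i : j₀ ≠ i := fun h => hj₀ (h ▸ rfl)
  have hYX : ∀ j ≠ i, Y j = X i := hgood (X i) (hX.1 i) hdir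
  have hYi := hY.1 i
  have hXi := hX.1 i
  split_ifs at hdir hgood with hE
  · have hYi2 : Y i = 2 := by
      by_contra hne
      have h1 := hgood 1 (by simp) (by omega) j₀ hj₀i
      have h2 := hgood 2 (by simp) (by omega) j₀ hj₀i
      omega
    exact exists_shelling_update_of_eq_one hX hpre (by omega) hYi2
      fun j hj => (hYX j hj).trans (by omega)
  · exfalso
    rcases hYi with hYi | hYi | hYi
    · have h2 := hgood 2 (by simp) (by omega) j₀ hj₀i
      have h3 := hgood 3 (by simp) (by omega) j₀ hj₀i
      omega
    · refine hE ?_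
      rw [evenCountBelow_eq_zero fun j hj => ?_]
      rw [hYX j (Fin.ne_of_lt hj)]
      omega
    · omega

end Snake

theorem T3n_shellable_general (n : ℕ) (X Y : Fin n → ℕ)
    (hX : IsFacet X) (hY : IsFacet Y)
    (hlt : snakeLt (List.ofFn X) (List.ofFn Y)) :
    ∃ Z : Fin n → ℕ, IsFacet Z ∧ snakeLt (List.ofFn Z) (List.ofFn Y) ∧
      (facet Z ∩ facet Y).card = n - 1 ∧
      facet X ∩ facet Y ⊆ facet Z ∩ facet Y := by
  obtain ⟨i, hpre, hi⟩ :=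
    exists_forall_lt_eq_and_ne fun h : X = Y => snakeLt_irrefl _ (h ▸ hlt)
  obtain ⟨k, v, hk, hv, hdir, hne⟩ :=
    exists_shelling_update hX hY hpre hi ((snakeLt_ofFn_iff hpre hi).1 hlt)
  have hvk : v ≠ Y k := by split_ifs at hdir <;> omega
  refine ⟨Function.update Y k v, isFacet_update hY.1 hv hne,
    (snakeLt_ofFn_update_iff hvk).2 hdir, ?_, ?_⟩
  · rw [facet_update_inter_facet hvk, card_erase_of_mem (mem_facet.2 rfl), card_facet]
  · rw [facet_update_inter_facet hvk]
    exact facet_inter_facet_subset_erase hk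

/-- Shellability of `T_{3,n}` for `n ≥ 2`: the snake ordering on its facets (nonconstant
ternary strings of length `n`) is a shelling order.  That is, for facets `X < Y` there is
a facet `Z < Y` such that `Δ_Z ∩ Δ_Y` is a codimension-one face of `Δ_Y` containing
`Δ_X ∩ Δ_Y`. -/
theorem T3n_shellable (n : ℕ) (hn : 2 ≤ n) (X Y : Fin n → ℕ)
    (hX : IsFacet X) (hY : IsFacet Y)
    (hlt : snakeLt (List.ofFn X) (List.ofFn Y)) :
    ∃ Z : Fin n → ℕ, IsFacet Z ∧ snakeLt (List.ofFn Z) (List.ofFn Y) ∧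
      (facet Z ∩ facet Y).card = n - 1 ∧
      facet X ∩ facet Y ⊆ facet Z ∩ facet Y :=
  T3n_shellable_general n X Y hX hY hlt
end

section
/- In the chain complex of the simplicial complex C_{1,2} (faces: length-n strings over {0,1,2} that are not (1,...,1) or (2,...,2), with face Δ_X having vertices (j,X_j) for X_j ≠ 0), the boundary of the (n-1)-chain Σ_F sgn(F)·F, where the sum is over all facets F (nonconstant strings over {1,2}) and sgn(F) = (-1)^{#1's in F}, equals [1] + (-1)^n [2], where [1] = Σ_{j=1}^n (-1)^j Δ_{X^j} with X^j the string with 0 in position j and 1 elsewhere, and [2] is defined analogously with 2's. -/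
/-! Boundary computation in the chain complex of `C_{1,2}`.  Faces are encoded as strings
`Fin n → Option (Fin 2)`, where the symbols `1` and `2` of the complex are `(0 : Fin 2)`
and `(1 : Fin 2)` respectively, and the symbol `0` is `none`.  The facet `Δ_F` of a total
string `F : Fin n → Fin 2` is the basis chain on `fun j => some (F j)`.  The vertices
`(j, F j)` of each simplex are oriented by their position `j` (in decreasing order, so the
sign attached to deleting position `j` is `(-1)` to the number of support positions after
`j`). -/

/-- A string encoding a face. -/
abbrev Str (n : ℕ) := Fin n → Option (Fin 2)

/-- Simplicial boundary of a single string: the alternating sum of the deletions of the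
support positions. -/
noncomputable def bnd {n : ℕ} (X : Str n) : Str n →₀ ℤ :=
  ∑ j ∈ Finset.univ.filter (fun j => X j ≠ none),
    ((-1 : ℤ) ^ (Finset.univ.filter fun i => j < i ∧ X i ≠ none).card) •
      Finsupp.single (Function.update X j none) 1

/-- The boundary operator on chains. -/
noncomputable def dFull (n : ℕ) : (Str n →₀ ℤ) →ₗ[ℤ] (Str n →₀ ℤ) :=
  Finsupp.lift (Str n →₀ ℤ) ℤ (Str n) bnd

/-- The would-be boundary `[b] = Σ_j (-1)^j Δ_{X^j}` of the removed constant facet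
`(b,…,b)`, where `X^j` equals `b` everywhere except position `j`, where it is `0`. -/
noncomputable def bracket (n : ℕ) (b : Fin 2) : Str n →₀ ℤ :=
  ∑ j : Fin n,
    ((-1 : ℤ) ^ (j : ℕ)) • Finsupp.single (Function.update (fun _ => some b) j none) 1

/-! The signed sum of *all* facets, the two constant ones included, is a cycle: the face
obtained by deleting position `j` from `F` is also obtained from `F` with its `j`-th symbol
flipped, and flipping one symbol changes `sgn`, so these contributions cancel in pairs.  Hence
the boundary of the sum over nonconstant facets is minus the boundary of the two signed
constant facets, and the boundary of the constant facet `(b,…,b)` is `-(-1)^n [b]`. -/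

theorem dFull_single (n : ℕ) (X : Str n) (c : ℤ) :
    dFull n (Finsupp.single X c) = c • bnd X := by
  simp [dFull]

/-- The sign `sgn F` of the paper. -/
noncomputable def facetSign {n : ℕ} (F : Fin n → Fin 2) : ℤ :=
  (-1 : ℤ) ^ (Finset.univ.filter fun j => F j = 0).card

theorem facetSign_update {n : ℕ} (F : Fin n → Fin 2) (j : Fin n) (v : Fin 2) :
    facetSign (Function.update F j v) =
      (if v = 0 then -1 else 1) * ∏ i ∈ Finset.univ \ {j}, (if F i = 0 then -1 else 1) := by
  rw [facetSign, ← Finset.prod_const, Finset.prod_filter,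
    ← Finset.prod_update_of_mem (Finset.mem_univ j)]
  exact Finset.prod_congr rfl fun i _ =>
    Function.apply_update (fun _ x => if x = 0 then -1 else 1) F j v i

theorem facetSign_update_add_one {n : ℕ} (F : Fin n → Fin 2) (j : Fin n) :
    facetSign (Function.update F j (F j + 1)) = -facetSign F := by
  conv_rhs => rw [← Function.update_eq_self j F]
  rw [facetSign_update, facetSign_update, ← neg_mul]
  congr 1
  exact (by decide : ∀ x : Fin 2,
    (if x + 1 = 0 then (-1 : ℤ) else 1) = -if x = 0 then -1 else 1) _

theorem bnd_facet {n : ℕ} (F : Fin n → Fin 2) :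
    bnd (fun i => some (F i)) = ∑ j : Fin n,
      (-1 : ℤ) ^ (n - 1 - j) • Finsupp.single (Function.update (fun i => some (F i)) j none) 1 := by
  simp only [bnd, ne_eq, reduceCtorEq, not_false_eq_true, and_true, Finset.filter_true]
  refine Finset.sum_congr rfl fun j _ => ?_
  rw [← Fin.card_Ioi j, Finset.filter_lt_eq_Ioi]

theorem sum_facetSign_smul_bnd_eq_zero (n : ℕ) :
    ∑ F : Fin n → Fin 2, facetSign F • bnd (fun i => some (F i)) = 0 := by
  simp_rw [bnd_facet, Finset.smul_sum]
  rw [Finset.sum_comm]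
  refine Finset.sum_eq_zero fun j _ => ?_
  have flip_flip : ∀ x : Fin 2, x + 1 + 1 = x := by decide
  have flip_ne : ∀ x : Fin 2, x + 1 ≠ x := by decide
  refine Finset.sum_ninvolution (fun F => Function.update F j (F j + 1)) (fun F => ?_)
    (fun F _ h => flip_ne (F j) (by simpa using congrFun h j)) (fun _ => Finset.mem_univ _)
    (fun F => by simp [flip_flip])
  have same_face : Function.update (fun i => some (Function.update F j (F j + 1) i)) j none
      = Function.update (fun i => some (F i)) j none := by
    rw [← Function.comp_def some, Function.comp_update, Function.update_idem]; rfl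
  rw [same_face, facetSign_update_add_one]
  module

theorem neg_one_pow_sub_one_sub {n j : ℕ} (h : j < n) :
    (-1 : ℤ) ^ (n - 1 - j) = -(-1) ^ n * (-1) ^ j := by
  obtain ⟨k, rfl⟩ := Nat.exists_eq_add_of_lt h
  have hsq : (-1 : ℤ) ^ j * (-1) ^ j = 1 := by rw [← mul_pow]; norm_num
  rw [show j + k + 1 - 1 - j = k by omega]
  linear_combination (-(-1 : ℤ) ^ k) * hsq

theorem bnd_const {n : ℕ} (b : Fin 2) :
    bnd (fun _ : Fin n => some b) = -(-1 : ℤ) ^ n • bracket n b := by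
  rw [bnd_facet (fun _ => b), bracket, Finset.smul_sum]
  refine Finset.sum_congr rfl fun j _ => ?_
  rw [neg_one_pow_sub_one_sub j.isLt, smul_smul]

theorem facetSign_const_zero (n : ℕ) : facetSign (fun _ : Fin n => (0 : Fin 2)) = (-1) ^ n := by
  simp [facetSign]

theorem facetSign_const_one (n : ℕ) : facetSign (fun _ : Fin n => (1 : Fin 2)) = 1 := by
  simp [facetSign]

theorem filter_not_exists_ne_eq_consts {n : ℕ} (hn : 0 < n) :
    Finset.univ.filter (fun F : Fin n → Fin 2 => ¬∃ i j, F i ≠ F j) =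
      {fun _ => 0, fun _ => 1} := by
  ext F
  simp only [Finset.mem_filter, Finset.mem_univ, true_and, Finset.mem_insert,
    Finset.mem_singleton, not_exists, not_ne_iff]
  constructor
  · intro hconst
    have hF : F = fun _ => F ⟨0, hn⟩ := funext fun i => hconst i ⟨0, hn⟩
    rcases Fin.exists_fin_two.mp ⟨F ⟨0, hn⟩, rfl⟩ with h | h <;> rw [hF, h] <;> simp
  · rintro (rfl | rfl) <;> exact fun _ _ => rfl

theorem boundary_of_signed_facet_sum_general (n : ℕ) :
    dFull n
      (∑ F ∈ Finset.univ.filter (fun F : Fin n → Fin 2 => ∃ i j, F i ≠ F j),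
        ((-1 : ℤ) ^ (Finset.univ.filter fun j => F j = 0).card) •
          Finsupp.single (fun j => some (F j)) 1)
      = bracket n 0 + ((-1 : ℤ) ^ n) • bracket n 1 := by
  rcases Nat.eq_zero_or_pos n with rfl | hn
  · simp [bracket]
  have hconst_ne : (fun _ : Fin n => (0 : Fin 2)) ≠ fun _ => 1 :=
    fun h => absurd (congrFun h ⟨0, hn⟩) (by decide)
  have hsplit := Finset.sum_filter_add_sum_filter_not Finset.univ
    (fun F : Fin n → Fin 2 => ∃ i j, F i ≠ F j) (fun F => facetSign F • bnd fun i => some (F i))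
  rw [sum_facetSign_smul_bnd_eq_zero, filter_not_exists_ne_eq_consts hn,
    Finset.sum_pair hconst_ne, facetSign_const_zero, facetSign_const_one, bnd_const,
    bnd_const] at hsplit
  simp_rw [map_sum, Finsupp.smul_single_one, dFull_single]
  refine (eq_neg_of_add_eq_zero_left hsplit).trans ?_
  have hsq : (-1 : ℤ) ^ n * (-1) ^ n = 1 := by rw [← mul_pow]; norm_num
  rw [smul_smul, mul_neg, hsq, one_smul, neg_smul, neg_smul, one_smul, neg_add, neg_neg, neg_neg]

/-- In the chain complex of `C_{1,2}`, the boundary of the `(n-1)`-chain `Σ_F sgn(F)·F`,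
where `F` ranges over nonconstant total strings over `{1,2}` and `sgn(F) = (-1)^{#1's in F}`,
equals `[1] + (-1)^n [2]`.  (Symbol `1` is `(0 : Fin 2)`, symbol `2` is `(1 : Fin 2)`.) -/
theorem boundary_of_signed_facet_sum (n : ℕ) (hn : 2 ≤ n) :
    dFull n
      (∑ F ∈ Finset.univ.filter (fun F : Fin n → Fin 2 => ∃ i j, F i ≠ F j),
        ((-1 : ℤ) ^ (Finset.univ.filter fun j => F j = 0).card) •
          Finsupp.single (fun j => some (F j)) 1)
      = bracket n 0 + ((-1 : ℤ) ^ n) • bracket n 1 :=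
  boundary_of_signed_facet_sum_general n
end

section
/- The number of facets of the polyhedral decomposition of the space of 4 labeled points on a tropical line in TP^3 (the complex T_{4,4}) is 3·(5^4 - 2·3^4 + 1) = 1392. -/
open Finset

/-!
Inclusion–exclusion over the two sides of the interior edge. Segments `0, 1` and `2, 3` are the
leaves on either side and `4` is the interior edge; of the `5^4` placements, `3^4` leave the
leaves on one side empty, `3^4` those on the other side, and exactly one (all points on the
interior edge) does both, so each of the 3 trees carries `5^4 - 2·3^4 + 1 = 464` facets.
-/

variable {ι α : Type*} [Fintype ι] [DecidableEq ι] [Fintype α]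

theorem card_filter_forall_apply (p : α → Prop) [DecidablePred p] :
    #{f : ι → α | ∀ j, p (f j)} = #{a | p a} ^ Fintype.card ι := by
  have hpi : ({f | ∀ j, p (f j)} : Finset (ι → α)) = Fintype.piFinset fun _ => {a | p a} := by
    ext f; simp
  rw [hpi, Fintype.card_piFinset, prod_const, card_univ]

/-- Stated additively to avoid truncated subtraction in `ℕ`. -/
theorem card_filter_exists_and_exists_add [DecidableEq α] (p q : α → Prop)
    [DecidablePred p] [DecidablePred q] :
    #{f : ι → α | (∃ j, p (f j)) ∧ ∃ j, q (f j)} + #{a | ¬p a} ^ Fintype.card ι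
        + #{a | ¬q a} ^ Fintype.card ι
      = Fintype.card α ^ Fintype.card ι + #{a | ¬p a ∧ ¬q a} ^ Fintype.card ι := by
  set A : Finset (ι → α) := {f | ∀ j, ¬p (f j)}
  set B : Finset (ι → α) := {f | ∀ j, ¬q (f j)}
  have hcompl : ({f | ¬((∃ j, p (f j)) ∧ ∃ j, q (f j))} : Finset (ι → α)) = A ∪ B := by
    ext f; simp only [A, B, mem_filter, mem_union, mem_univ, true_and, not_and_or, not_exists]
  have hinter : A ∩ B = ({f | ∀ j, ¬p (f j) ∧ ¬q (f j)} : Finset (ι → α)) := by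
    ext f; simp [A, B, forall_and]
  have hsplit := card_filter_add_card_filter_not (s := (univ : Finset (ι → α)))
    fun f => (∃ j, p (f j)) ∧ ∃ j, q (f j)
  have hunion := card_union_add_card_inter A B
  rw [hinter, card_filter_forall_apply (fun a => ¬p a ∧ ¬q a),
    card_filter_forall_apply (fun a => ¬p a), card_filter_forall_apply (fun a => ¬q a)] at hunion
  rw [hcompl, card_univ, Fintype.card_fun] at hsplit
  omega

/-- Facets of the polyhedral decomposition of `T_{4,4}`: a facet is a choice of one of the
3 trivalent trees with 4 labeled leaves together with a placement of each of the 4 labeled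
points on one of the 5 segments (segments `0,1` are the two leaves on one side of the
interior edge, segments `2,3` the two leaves on the other side, and segment `4` the
interior edge), subject to the condition that on each side of the interior edge at least
one of the two leaves carries a point.  The number of facets is
`3·(5^4 − 2·3^4 + 1) = 1392`. -/
theorem card_facets_T44 :
    (Finset.univ.filter fun p : Fin 3 × (Fin 4 → Fin 5) =>
        (∃ j, p.2 j = 0 ∨ p.2 j = 1) ∧ (∃ j, p.2 j = 2 ∨ p.2 j = 3)).card = 1392 ∧
    3 * (5 ^ 4 - 2 * 3 ^ 4 + 1) = 1392 := by
  refine ⟨?_, by norm_num⟩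
  have hplacements :
      #{f : Fin 4 → Fin 5 | (∃ j, f j = 0 ∨ f j = 1) ∧ ∃ j, f j = 2 ∨ f j = 3} + 3 ^ 4 + 3 ^ 4
        = 5 ^ 4 + 1 ^ 4 := by
    convert card_filter_exists_and_exists_add (ι := Fin 4)
      (fun a : Fin 5 => a = 0 ∨ a = 1) (fun a => a = 2 ∨ a = 3) <;> decide
  rw [← univ_product_univ, filter_product_right (fun f : Fin 4 → Fin 5 =>
    (∃ j, f j = 0 ∨ f j = 1) ∧ ∃ j, f j = 2 ∨ f j = 3), card_product, card_univ, Fintype.card_fin]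
  omega
end
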